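/- arXiv:math/0509598 — 8 statements merged into one kernel-verified Lean document; each statement's English description precedes it below -/
import Mathlib

section
/- Let q be an odd prime power with q ≡ 3 (mod 4), and let i, j ∈ F_q be nonzero. Define f(i,j,k) = ij - (i-j-k)²/4. Then there are at least (q+1)/2 values of k ∈ F_q such that f(i,j,k) is a square in F_q (possibly zero). -/
open scoped Classical

/-!
Put `t = (i - j - k) / 2`, so that the quantity becomes `a - t ^ 2` with `a = i * j ≠ 0`.
Since `q ≡ 3 (mod 4)`, `-1` is not a square, so whenever `a - t ^ 2` is not a square,
`t ^ 2 - a = s ^ 2` with `s ≠ 0`. Then `t + s` and `t - s` are two distinct nonzero solutions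
`u` of `(u + a / u) / 2 = t`. These fibres are disjoint, so at most `(q - 1) / 2` values of `t`
make `a - t ^ 2` a non-square.
-/

open Finset

theorem two_ne_zero_of_not_isSquare_neg_one {R : Type*} [CommRing R]
    (h : ¬IsSquare (-1 : R)) : (2 : R) ≠ 0 :=
  fun h2 => h ⟨1, by linear_combination -h2⟩

section FiniteField

variable {F : Type*} [Field F] [Fintype F]

theorem isSquare_neg_of_not_isSquare (hF : ¬IsSquare (-1 : F)) {x : F} (hx : ¬IsSquare x) :
    IsSquare (-x) := by
  by_contra hnx
  have hmul := map_mul (quadraticChar F) (-1) (-x)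
  rw [neg_one_mul, neg_neg, quadraticChar_neg_one_iff_not_isSquare.mpr hx,
    quadraticChar_neg_one_iff_not_isSquare.mpr hF,
    quadraticChar_neg_one_iff_not_isSquare.mpr hnx] at hmul
  norm_num at hmul

theorem two_le_card_fiber_of_sq_sub_eq_sq {a t s : F} (h2 : (2 : F) ≠ 0) (ha : a ≠ 0)
    (hs : s ≠ 0) (hts : t ^ 2 - a = s ^ 2) :
    2 ≤ #{u ∈ univ.erase 0 | (u + a / u) / 2 = t} := by
  have hprod : (t + s) * (t - s) = a := by linear_combination hts
  have hplus : t + s ≠ 0 := left_ne_zero_of_mul (hprod ▸ ha)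
  have hminus : t - s ≠ 0 := right_ne_zero_of_mul (hprod ▸ ha)
  have hne : t + s ≠ t - s := fun h => hs (by
    have : 2 * s = 0 := by linear_combination h
    exact (mul_eq_zero.mp this).resolve_left h2)
  have hfib : ∀ u v : F, u * v = a → u ≠ 0 → u + v = 2 * t →
      u ∈ ({u ∈ univ.erase 0 | (u + a / u) / 2 = t} : Finset F) := by
    intro u v huv hu hsum
    simp only [mem_filter, mem_erase, mem_univ, and_true]
    refine ⟨hu, ?_⟩
    rw [← huv, mul_div_cancel_left₀ _ hu, hsum, mul_div_cancel_left₀ _ h2]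
  calc 2 = #{t + s, t - s} := (card_pair hne).symm
    _ ≤ _ := by
      refine card_le_card fun u hu => ?_
      rw [mem_insert, mem_singleton] at hu
      rcases hu with rfl | rfl
      · exact hfib _ _ hprod hplus (by ring)
      · exact hfib _ _ (by rw [mul_comm, hprod]) hminus (by ring)

theorem card_add_one_le_two_mul_card_isSquare_sub_sq (hF : ¬IsSquare (-1 : F)) {a : F}
    (ha : a ≠ 0) : Fintype.card F + 1 ≤ 2 * #{t | IsSquare (a - t ^ 2)} := by
  have h2 := two_ne_zero_of_not_isSquare_neg_one hF
  set bad : Finset F := {t | ¬IsSquare (a - t ^ 2)}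
  have hfiber : ∀ t ∈ bad, 2 ≤ #{u ∈ univ.erase 0 | (u + a / u) / 2 = t} := by
    intro t ht
    have hns : ¬IsSquare (a - t ^ 2) := (mem_filter.mp ht).2
    obtain ⟨s, hs⟩ := isSquare_neg_of_not_isSquare hF hns
    have hs0 : s ≠ 0 := by
      rintro rfl
      exact hns ⟨0, by linear_combination -hs⟩
    exact two_le_card_fiber_of_sq_sub_eq_sq h2 ha hs0 (by linear_combination hs)
  have hbad : 2 * #bad ≤ Fintype.card F - 1 :=
    calc 2 * #bad = ∑ _t ∈ bad, 2 := by rw [sum_const, smul_eq_mul, mul_comm]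
      _ ≤ ∑ t ∈ bad, #{u ∈ univ.erase 0 | (u + a / u) / 2 = t} := sum_le_sum hfiber
      _ = #{u ∈ univ.erase 0 | (u + a / u) / 2 ∈ bad} := sum_card_fiberwise_eq_card_filter _ _ _
      _ ≤ #(univ.erase (0 : F)) := card_filter_le _ _
      _ = Fintype.card F - 1 := by rw [card_erase_of_mem (mem_univ _), card_univ]
  have hsplit : #{t | IsSquare (a - t ^ 2)} + #bad = Fintype.card F :=
    card_filter_add_card_filter_not _
  have hpos : 0 < Fintype.card F := Fintype.card_pos
  omega

end FiniteField

theorem stmt_8_general (F : Type*) [Field F] [Fintype F] (q : ℕ)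
    (hcard : Fintype.card F = q) (h4 : q % 4 = 3)
    (i j : F) (hi : i ≠ 0) (hj : j ≠ 0) :
    (q + 1) / 2 ≤ Nat.card {k : F // IsSquare (i * j - (i - j - k) ^ 2 / 4)} := by
  have hF : ¬IsSquare (-1 : F) := by
    rw [FiniteField.isSquare_neg_one_iff, hcard, h4]
    exact fun h => h rfl
  have h2 := two_ne_zero_of_not_isSquare_neg_one hF
  have e : {k : F // IsSquare (i * j - (i - j - k) ^ 2 / 4)} ≃
      {t : F // IsSquare (i * j - t ^ 2)} :=
    ((Equiv.subLeft (i - j)).trans (Equiv.divRight₀ 2 h2)).subtypeEquiv fun k => by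
      simp only [Equiv.trans_apply, Equiv.subLeft_apply, Equiv.divRight₀_apply, div_pow]
      norm_num
  have hcount := card_add_one_le_two_mul_card_isSquare_sub_sq hF (mul_ne_zero hi hj)
  rw [Nat.card_congr e, Nat.card_eq_fintype_card, Fintype.card_subtype]
  omega

theorem stmt_8 (F : Type*) [Field F] [Fintype F] (q : ℕ)
    (hcard : Fintype.card F = q) (hodd : Odd q) (h4 : q % 4 = 3)
    (i j : F) (hi : i ≠ 0) (hj : j ≠ 0) :
    (q + 1) / 2 ≤ Nat.card {k : F // IsSquare (i * j - (i - j - k) ^ 2 / 4)} :=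
  stmt_8_general F q hcard h4 i j hi hj
end

section
/- Let q be an odd prime power with q ≡ 3 (mod 4). Then for any n ≥ 4 and any a₁, ..., aₙ ∈ F_q \ {0}, there exist points A₁, ..., Aₙ ∈ F_q² such that Q(Aᵢ, A_{i+1}) = aᵢ for all i = 1, ..., n, where A_{n+1} = A₁. -/
open scoped Classical

def quadrance {F : Type*} [Field F] (A B : F × F) : F :=
  (B.1 - A.1) ^ 2 + (B.2 - A.2) ^ 2

/-!
When `q ≡ 3 (mod 4)`, `-1` is not a square in `F`, so `F × F` is the field `F(√-1)` and `x² + y²`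
is its norm: multiplicative, surjective onto `F`, and zero only at `0`. Multiplication by an element
of norm `a / b` carries the circle `x² + y² = b` into `x² + y² = a`, so all circles of nonzero
radius have the same size, namely `q + 1`. A nonzero vector `s` is a sum `z + w` with `z`, `w` on
two given circles in at most two ways (`s̄ z` has prescribed real part and norm), so the sumset of
two circles has more than `q² / 2` points, and two such sumsets cover `F × F` by pigeonhole. Hence
any `n ≥ 4` nonzero norms `aᵢ` are realised by vectors `dᵢ` with `∑ dᵢ = 0`, and the partial sums
of the `dᵢ` are the vertices of the required closed polygon.
-/

open Finset Polynomial
open scoped Pointwise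

theorem Finset.add_eq_univ_of_card_lt_card_add_card {G : Type*} [AddGroup G] [Fintype G]
    [DecidableEq G] {s t : Finset G} (h : Fintype.card G < #s + #t) : s + t = univ := by
  refine eq_univ_of_forall fun g => ?_
  have hinj : Function.Injective fun y : G => g - y := sub_right_injective
  obtain ⟨x, hx⟩ := inter_nonempty_of_card_lt_card_add_card (subset_univ s)
    (subset_univ (t.image fun y => g - y)) (by rwa [card_image_of_injective t hinj, card_univ])
  obtain ⟨hxs, y, hyt, rfl⟩ := And.imp_right mem_image.mp (mem_inter.mp hx)
  exact mem_add.mpr ⟨g - y, hxs, y, hyt, sub_add_cancel g y⟩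

namespace Quadrance

variable {F : Type*} [Field F]

def normSq (z : F × F) : F := z.1 ^ 2 + z.2 ^ 2

/-- Multiplication of `F(√-1)` in the coordinates `z = z.1 + z.2 √-1`. -/
def cmul (z w : F × F) : F × F := (z.1 * w.1 - z.2 * w.2, z.1 * w.2 + z.2 * w.1)

theorem quadrance_eq_normSq_sub (A B : F × F) : quadrance A B = normSq (B - A) := rfl

theorem normSq_cmul (z w : F × F) : normSq (cmul z w) = normSq z * normSq w := by
  simp only [normSq, cmul]; ring

theorem cmul_sub (z w w' : F × F) : cmul z (w - w') = cmul z w - cmul z w' := by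
  ext <;> simp only [cmul, Prod.fst_sub, Prod.snd_sub] <;> ring

theorem two_ne_zero_of_not_isSquare_neg_one (hF : ¬IsSquare (-1 : F)) : (2 : F) ≠ 0 :=
  fun h => hF ⟨1, by linear_combination -h⟩

theorem normSq_eq_zero_iff (hF : ¬IsSquare (-1 : F)) {z : F × F} : normSq z = 0 ↔ z = 0 := by
  refine ⟨fun h => ?_, fun h => by simp [h, normSq]⟩
  unfold normSq at h
  by_cases hy : z.2 = 0
  · have hx : z.1 = 0 := by simpa [hy] using h
    exact Prod.ext hx hy
  · exact absurd ⟨z.1 / z.2, by field_simp; linear_combination (norm := ring_nf) -h⟩ hF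

theorem cmul_injective (hF : ¬IsSquare (-1 : F)) {z : F × F} (hz : z ≠ 0) :
    Function.Injective (cmul z) := by
  intro w w' h
  have : normSq z * normSq (w - w') = 0 := by
    rw [← normSq_cmul, cmul_sub, h, sub_self]; simp [normSq]
  rw [mul_eq_zero, normSq_eq_zero_iff hF, normSq_eq_zero_iff hF, sub_eq_zero] at this
  exact this.resolve_left hz

variable [Fintype F]

theorem normSq_surjective (hF : ¬IsSquare (-1 : F)) :
    Function.Surjective (normSq : F × F → F) := by
  intro x
  have hodd : Fintype.card F % 2 = 1 := by
    have := FiniteField.isSquare_neg_one_iff.not.mp hF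
    omega
  obtain ⟨a, b, h⟩ := FiniteField.exists_root_sum_quadratic (f := X ^ 2) (g := X ^ 2 - C x)
    (degree_X_pow 2) (degree_X_pow_sub_C two_pos x) hodd
  exact ⟨(a, b), by
    simp only [eval_pow, eval_X, eval_sub, eval_C] at h
    simp only [normSq]
    linear_combination h⟩

noncomputable def circle (a : F) : Finset (F × F) := {z | normSq z = a}

@[simp]
theorem mem_circle {a : F} {z : F × F} : z ∈ circle a ↔ normSq z = a := by simp [circle]

theorem card_circle_le_card_circle (hF : ¬IsSquare (-1 : F)) {a b : F} (ha : a ≠ 0)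
    (hb : b ≠ 0) :
    #(circle b) ≤ #(circle a) := by
  obtain ⟨w, hw⟩ := normSq_surjective hF (a / b)
  have hw0 : w ≠ 0 := by rintro rfl; simp [normSq, ha, hb, eq_comm] at hw
  refine card_le_card_of_injOn (cmul w) (fun z hz => ?_) (cmul_injective hF hw0).injOn
  simp only [mem_coe, mem_circle] at hz ⊢
  rw [normSq_cmul, hw, hz, div_mul_cancel₀ a hb]

theorem card_circle (hF : ¬IsSquare (-1 : F)) {a : F} (ha : a ≠ 0) :
    #(circle a) = Fintype.card F + 1 := by
  set q := Fintype.card F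
  have hcard : ∀ b : F, b ≠ 0 → #(circle b) = #(circle a) := fun b hb =>
    le_antisymm (card_circle_le_card_circle hF ha hb) (card_circle_le_card_circle hF hb ha)
  have hzero : circle (0 : F) = {0} := by ext z; simp [normSq_eq_zero_iff hF]
  have hpart : q * q = 1 + (q - 1) * #(circle a) :=
    calc q * q = #(univ : Finset (F × F)) := by rw [card_univ, Fintype.card_prod]
    _ = ∑ b, #(circle b) := card_eq_sum_card_fiberwise (f := normSq) fun _ _ => mem_univ _
    _ = #(circle 0) + ∑ b ∈ univ.erase 0, #(circle b) := (add_sum_erase _ _ (mem_univ 0)).symm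
    _ = 1 + (q - 1) * #(circle a) := by
      rw [hzero, card_singleton, sum_congr rfl fun b hb => hcard b (ne_of_mem_erase hb), sum_const,
        card_erase_of_mem (mem_univ _), card_univ, smul_eq_mul]
  have hq : 1 < q := Fintype.one_lt_card
  obtain ⟨r, hr⟩ : ∃ r, q = r + 2 := ⟨q - 2, by omega⟩
  rw [hr, show r + 2 - 1 = r + 1 by omega] at hpart
  rw [hr]
  refine Nat.eq_of_mul_eq_mul_left (Nat.succ_pos r) ?_
  linarith

theorem card_filter_add_eq_le_two (hF : ¬IsSquare (-1 : F)) {a b : F} {s : F × F} (hs : s ≠ 0) :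
    #{p ∈ circle a ×ˢ circle b | p.1 + p.2 = s} ≤ 2 := by
  set s' : F × F := (s.1, -s.2)
  have hs' : s' ≠ 0 := by simpa [s', Prod.ext_iff] using hs
  have hnorm : normSq s' = normSq s := by simp only [normSq, s', neg_sq]
  have h2 := two_ne_zero_of_not_isSquare_neg_one hF
  -- The real part of `t = s̄ z` is fixed by the two norm conditions, and then so is `t.2²`.
  have hcoords : ∀ p ∈ {p ∈ circle a ×ˢ circle b | p.1 + p.2 = s},
      2 * (cmul s' p.1).1 = normSq s + a - b ∧ p.2 = s - p.1 := by
    intro p hp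
    simp only [mem_filter, mem_product, mem_circle] at hp
    obtain ⟨⟨hza, hzb⟩, hsum⟩ := hp
    have hp2 : p.2 = s - p.1 := by rw [← hsum]; abel
    refine ⟨?_, hp2⟩
    rw [hp2] at hzb
    simp only [normSq, cmul, s', Prod.fst_sub, Prod.snd_sub] at hza hzb ⊢
    linear_combination hza - hzb
  refine (card_le_card_of_injOn (fun p => (cmul s' p.1).2)
    (t := nthRootsFinset 2 (normSq s * a - ((normSq s + a - b) / 2) ^ 2)) ?_ ?_).trans
    ((Multiset.toFinset_card_le _).trans (card_nthRoots 2 _))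
  · intro p hp
    obtain ⟨hre, -⟩ := hcoords p hp
    have hza : normSq p.1 = a := (mem_circle.mp (mem_product.mp (mem_filter.mp hp).1).1)
    have hnormt := normSq_cmul s' p.1
    rw [hnorm, hza] at hnormt
    simp only [mem_coe, mem_nthRootsFinset two_pos]
    rw [← hre, mul_div_cancel_left₀ _ h2, ← hnormt, normSq]
    ring
  · intro p hp p' hp' h
    obtain ⟨hre, hp2⟩ := hcoords p hp
    obtain ⟨hre', hp2'⟩ := hcoords p' hp'
    have h1 : p.1 = p'.1 :=
      cmul_injective hF hs' (Prod.ext (mul_left_cancel₀ h2 (hre.trans hre'.symm)) h)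
    exact Prod.ext h1 (by rw [hp2, hp2', h1])

theorem card_lt_two_mul_card_circle_add_circle (hF : ¬IsSquare (-1 : F)) {a b : F} (ha : a ≠ 0)
    (hb : b ≠ 0) : Fintype.card (F × F) < 2 * #(circle a + circle b) := by
  set q := Fintype.card F
  set P := circle a ×ˢ circle b
  set S := circle a + circle b
  have hfiber : ∀ w, #{p ∈ P | p.1 + p.2 = w} ≤ 2 + if w = 0 then q + 1 else 0 := by
    intro w
    split_ifs with hw
    · calc #{p ∈ P | p.1 + p.2 = w} ≤ #(circle a) := by
            refine card_le_card_of_injOn Prod.fst (fun p hp => ?_) fun p hp p' hp' h => ?_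
            · exact (mem_product.mp (mem_filter.mp hp).1).1
            · have hp2 : p.2 = w - p.1 := eq_sub_of_add_eq' (mem_filter.mp hp).2
              have hp2' : p'.2 = w - p'.1 := eq_sub_of_add_eq' (mem_filter.mp hp').2
              exact Prod.ext h (by rw [hp2, hp2', h])
        _ ≤ 2 + (q + 1) := by rw [card_circle hF ha]; omega
    · exact (card_filter_add_eq_le_two hF hw).trans (by omega)
  have hP : #P = ∑ w ∈ S, #{p ∈ P | p.1 + p.2 = w} :=
    card_eq_sum_card_fiberwise fun p hp => add_mem_add (mem_product.mp hp).1 (mem_product.mp hp).2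
  have hsum : #P ≤ 2 * #S + (q + 1) :=
    calc #P ≤ ∑ w ∈ S, (2 + if w = 0 then q + 1 else 0) :=
          hP ▸ sum_le_sum fun w _ => hfiber w
    _ ≤ 2 * #S + (q + 1) := by
      rw [sum_add_distrib, sum_const, smul_eq_mul, sum_ite_eq']
      split_ifs <;> omega
  have hq : 0 < q := Fintype.card_pos
  rw [card_product, card_circle hF ha, card_circle hF hb] at hsum
  rw [Fintype.card_prod]
  nlinarith

theorem exists_fin_normSq_eq_sum_eq (hF : ¬IsSquare (-1 : F)) {n : ℕ} (hn : 4 ≤ n)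
    (a : Fin n → F) (ha : ∀ i, a i ≠ 0) (s : F × F) :
    ∃ d : Fin n → F × F, (∀ i, normSq (d i) = a i) ∧ ∑ i, d i = s := by
  induction n, hn using Nat.le_induction generalizing s with
  | base =>
    have hcover : circle (a 0) + circle (a 1) + (circle (a 2) + circle (a 3)) = univ :=
      add_eq_univ_of_card_lt_card_add_card <| by
        have h01 := card_lt_two_mul_card_circle_add_circle hF (ha 0) (ha 1)
        have h23 := card_lt_two_mul_card_circle_add_circle hF (ha 2) (ha 3)
        omega
    obtain ⟨x, hx, y, hy, hxy⟩ := mem_add.mp (hcover ▸ mem_univ s)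
    obtain ⟨z₀, hz₀, z₁, hz₁, rfl⟩ := mem_add.mp hx
    obtain ⟨z₂, hz₂, z₃, hz₃, rfl⟩ := mem_add.mp hy
    refine ⟨![z₀, z₁, z₂, z₃], fun i => ?_, ?_⟩
    · rw [mem_circle] at hz₀ hz₁ hz₂ hz₃
      fin_cases i
      exacts [hz₀, hz₁, hz₂, hz₃]
    · rw [Fin.sum_univ_four, ← hxy]
      simp [add_assoc]
  | succ n hn ih =>
    obtain ⟨x, hx⟩ := normSq_surjective hF (a (Fin.last n))
    obtain ⟨d, hd, hsum⟩ := ih (fun i => a i.castSucc) (fun i => ha _) (s - x)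
    refine ⟨Fin.snoc d x, fun i => ?_, ?_⟩
    · induction i using Fin.lastCases <;> simp [hd, hx]
    · simp [Fin.sum_univ_castSucc, hsum]

theorem exists_normSq_eq_sum_eq (hF : ¬IsSquare (-1 : F)) {ι : Type*} [Fintype ι]
    (hι : 4 ≤ Fintype.card ι) (a : ι → F) (ha : ∀ i, a i ≠ 0) (s : F × F) :
    ∃ d : ι → F × F, (∀ i, normSq (d i) = a i) ∧ ∑ i, d i = s := by
  let e := Fintype.equivFin ι
  obtain ⟨d, hd, hsum⟩ := exists_fin_normSq_eq_sum_eq hF hι (a ∘ e.symm) (fun i => ha _) s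
  exact ⟨fun i => d (e i), fun i => by simpa using hd (e i), by rwa [e.sum_comp d]⟩

end Quadrance

theorem ZMod.exists_add_one_eq_add_of_sum_eq_zero {G : Type*} [AddCommGroup G] {n : ℕ} [NeZero n]
    (d : ZMod n → G) (hd : ∑ i, d i = 0) :
    ∃ A : ZMod n → G, ∀ i, A (i + 1) = A i + d i := by
  refine ⟨fun i => ∑ j ∈ range i.val, d j, fun i => ?_⟩
  have hi : ((i.val : ℕ) : ZMod n) = i := ZMod.natCast_zmod_val i
  have hsucc : i + 1 = ((i.val + 1 : ℕ) : ZMod n) := by rw [Nat.cast_succ, hi]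
  obtain hlt | heq : i.val + 1 < n ∨ i.val + 1 = n := Nat.lt_or_eq_of_le (ZMod.val_lt i)
  · dsimp only
    rw [hsucc, ZMod.val_natCast_of_lt hlt, sum_range_succ, hi]
  · have hrange : ∑ j ∈ range n, d j = ∑ i, d i :=
      sum_nbij' (↑) ZMod.val (fun _ _ => mem_univ _)
        (fun j _ => mem_range.mpr (ZMod.val_lt j))
        (fun _ hj => ZMod.val_natCast_of_lt (mem_range.mp hj))
        (fun j _ => ZMod.natCast_zmod_val j) fun _ _ => rfl
    have hwrap : i + 1 = 0 := by rw [hsucc, heq, ZMod.natCast_self]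
    have hcycle := sum_range_succ (fun j : ℕ => d j) i.val
    rw [hi, heq, hrange, hd] at hcycle
    dsimp only
    rw [hwrap, ZMod.val_zero, sum_range_zero, hcycle]

theorem stmt_9_general (F : Type*) [Field F] [Fintype F] (q : ℕ)
    (hcard : Fintype.card F = q) (h4 : q % 4 = 3)
    (n : ℕ) (hn : 4 ≤ n) (a : ZMod n → F) (ha : ∀ i, a i ≠ 0) :
    ∃ A : ZMod n → F × F, ∀ i : ZMod n, quadrance (A i) (A (i + 1)) = a i := by
  have hF : ¬IsSquare (-1 : F) := by simp [FiniteField.isSquare_neg_one_iff, hcard, h4]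
  have : NeZero n := ⟨by omega⟩
  obtain ⟨d, hd, hsum⟩ := Quadrance.exists_normSq_eq_sum_eq hF (by rwa [ZMod.card]) a ha 0
  obtain ⟨A, hA⟩ := ZMod.exists_add_one_eq_add_of_sum_eq_zero d hsum
  exact ⟨A, fun i => by rw [Quadrance.quadrance_eq_normSq_sub, hA, add_sub_cancel_left, hd]⟩

theorem stmt_9 (F : Type*) [Field F] [Fintype F] (q : ℕ)
    (hcard : Fintype.card F = q) (hodd : Odd q) (h4 : q % 4 = 3)
    (n : ℕ) (hn : 4 ≤ n) (a : ZMod n → F) (ha : ∀ i, a i ≠ 0) :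
    ∃ A : ZMod n → F × F, ∀ i : ZMod n, quadrance (A i) (A (i + 1)) = a i :=
  stmt_9_general F q hcard h4 n hn a ha
end

section
/- Let q be an odd prime power with q ≡ 3 (mod 4). For any nonzero a₁, a₂, a₃, a₄ ∈ F_q, there exist points A₁, A₂, A₃, A₄ ∈ F_q² with Q(A₁,A₂) = a₁, Q(A₂,A₃) = a₂, Q(A₃,A₄) = a₃, and Q(A₄,A₁) = a₄. -/
open scoped Classical

/-!
Join `A₁` to `A₃` by a diagonal of quadrance `c`. A triangle with quadrances `a, b, c`, `c ≠ 0`,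
sits on a given segment of quadrance `c` as soon as its Archimedes function
`A(a, b, c) = 4ab - (c - a - b)²` is a square: multiplying the segment by `(t + iu) / c`, where
`t = (c + a - b) / 2` and `u² = A(a, b, c) / 4`, gives the third vertex. Since `-1` is a
non-square, for `m ≠ 0` every `d` with `m - d²` a non-square gives `d² - z² = m` with `z ≠ 0`,
hence two points `(d ± z, d ∓ z)` on the hyperbola `xy = m`, which has `q - 1` points; so at most
`(q - 1) / 2` values of `c` are bad for each of the triangles `(a₁, a₂, c)` and `(a₃, a₄, c)`,
and some `c` is good for both.
-/

open Finset

/-- Wildberger's Archimedes function: sixteen times the squared area of a Euclidean triangle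
with squared side lengths `a, b, c`. -/
def archimedes {F : Type*} [Field F] (a b c : F) : F :=
  (a + b + c) ^ 2 - 2 * (a ^ 2 + b ^ 2 + c ^ 2)

section

variable {F : Type*} [Field F]

lemma archimedes_eq (a b c : F) : archimedes a b c = 4 * a * b - (c - (a + b)) ^ 2 := by
  unfold archimedes; ring

lemma quadrance_comm (A B : F × F) : quadrance A B = quadrance B A := by
  unfold quadrance; ring

lemma two_ne_zero_of_not_isSquare_neg_one_s10 (hneg : ¬IsSquare (-1 : F)) : (2 : F) ≠ 0 :=
  fun h ↦ hneg ⟨1, by linear_combination -h⟩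

lemma ringChar_ne_two_of_not_isSquare_neg_one [Fintype F] (hneg : ¬IsSquare (-1 : F)) :
    ringChar F ≠ 2 :=
  fun h ↦ hneg (FiniteField.isSquare_of_char_two h _)

lemma eq_zero_of_sq_add_sq_eq_zero (hneg : ¬IsSquare (-1 : F)) {x y : F}
    (h : x ^ 2 + y ^ 2 = 0) : x = 0 ∧ y = 0 := by
  rcases eq_or_ne y 0 with rfl | hy
  · exact ⟨pow_eq_zero_iff two_ne_zero |>.1 (by linear_combination h), rfl⟩
  · exact absurd ⟨x / y, by field_simp; linear_combination -h⟩ hneg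

lemma exists_quadrance_eq [Fintype F] (hneg : ¬IsSquare (-1 : F)) (P : F × F) (a : F) :
    ∃ Q, quadrance P Q = a := by
  obtain ⟨x, y, h⟩ := FiniteField.exists_root_sum_quadratic
    (Polynomial.degree_X_pow 2) (Polynomial.degree_X_pow_sub_C two_pos a)
    (FiniteField.odd_card_of_char_ne_two (ringChar_ne_two_of_not_isSquare_neg_one hneg))
  simp only [Polynomial.eval_pow, Polynomial.eval_X, Polynomial.eval_sub,
    Polynomial.eval_C] at h
  exact ⟨(P.1 + x, P.2 + y), by unfold quadrance; ring_nf; linear_combination h⟩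

lemma exists_quadrance_eq_quadrance_eq [Fintype F] (hneg : ¬IsSquare (-1 : F))
    {a b c : F} (habc : IsSquare (archimedes a b c)) {P R : F × F} (hPR : quadrance P R = c) :
    ∃ Q, quadrance P Q = a ∧ quadrance Q R = b := by
  obtain ⟨y, hy⟩ := habc
  rw [archimedes_eq] at hy
  rcases eq_or_ne c 0 with rfl | hc
  · have hab : a = b := by
      by_contra hab
      exact hneg ⟨y / (a - b), by field_simp [sub_ne_zero.mpr hab]; linear_combination hy⟩
    obtain ⟨h₁, h₂⟩ := eq_zero_of_sq_add_sq_eq_zero hneg hPR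
    have hRP : R = P := Prod.ext (sub_eq_zero.mp h₁) (sub_eq_zero.mp h₂)
    obtain ⟨Q, hQ⟩ := exists_quadrance_eq hneg P a
    exact ⟨Q, hQ, by rw [hRP, quadrance_comm, hQ, hab]⟩
  · have two_ne := two_ne_zero_of_not_isSquare_neg_one_s10 hneg
    set w₁ := R.1 - P.1
    set w₂ := R.2 - P.2
    set t := (c + a - b) / 2
    set u := y / 2
    have htu : t ^ 2 + u ^ 2 = c * a := by
      simp only [t, u]; field_simp; linear_combination -hy
    have ht : 2 * t = c + a - b := by simp only [t]; field_simp
    refine ⟨(P.1 + (t * w₁ + u * w₂) / c, P.2 + (t * w₂ - u * w₁) / c), ?_, ?_⟩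
    · unfold quadrance at hPR ⊢
      field_simp
      linear_combination (w₁ ^ 2 + w₂ ^ 2) * htu + c * a * hPR
    · unfold quadrance at hPR ⊢
      field_simp
      linear_combination (w₁ ^ 2 + w₂ ^ 2) * htu + (c ^ 2 - 2 * c * t + c * a) * hPR - c ^ 2 * ht

lemma isSquare_neg_of_not_isSquare_s10 [Fintype F] (hneg : ¬IsSquare (-1 : F)) {u : F}
    (hu : ¬IsSquare u) : IsSquare (-u) := by
  have hu0 : -u ≠ 0 := neg_ne_zero.mpr fun h ↦ hu (h ▸ IsSquare.zero)
  apply (quadraticChar_one_iff_isSquare hu0).1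
  rw [neg_eq_neg_one_mul, map_mul, quadraticChar_neg_one_iff_not_isSquare.2 hneg,
    quadraticChar_neg_one_iff_not_isSquare.2 hu]
  norm_num

lemma card_filter_mul_eq [Fintype F] {m : F} (hm : m ≠ 0) :
    #{p : F × F | p.1 * p.2 = m} = Fintype.card F - 1 := by
  rw [← card_univ, ← card_erase_of_mem (mem_univ 0)]
  refine card_bij' (fun p _ ↦ p.1) (fun x _ ↦ (x, m / x)) ?_ ?_ ?_ ?_ <;>
    simp only [mem_filter, mem_erase, mem_univ, and_true, true_and, Prod.forall]
  · rintro x y h rfl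
    exact hm (by simpa using h.symm)
  · intro x hx
    field_simp
  · intro x y h
    rw [← h]
    field_simp [left_ne_zero_of_mul (h ▸ hm)]
  · intro x _
    trivial

lemma two_mul_card_filter_not_isSquare_le [Fintype F] (hneg : ¬IsSquare (-1 : F)) {m : F}
    (hm : m ≠ 0) (s : F) :
    2 * #{c | ¬IsSquare (m - (c - s) ^ 2)} ≤ Fintype.card F - 1 := by
  set T : Finset F := {c | ¬IsSquare (m - (c - s) ^ 2)}
  have two_ne := two_ne_zero_of_not_isSquare_neg_one_s10 hneg
  have hz : ∀ c ∈ T, ∃ z : F, z ≠ 0 ∧ (c - s) ^ 2 - z ^ 2 = m := by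
    intro c hc
    have hc := (mem_filter.1 hc).2
    obtain ⟨z, hz⟩ := isSquare_neg_of_not_isSquare_s10 hneg hc
    refine ⟨z, ?_, by linear_combination hz⟩
    rintro rfl
    exact hc ⟨0, by linear_combination -hz⟩
  choose! z hz0 hzm using hz
  calc 2 * #T = #(T ×ˢ ({1, -1} : Finset F)) := by
        rw [card_product, card_pair fun h ↦ two_ne (by linear_combination h)]; ring
    _ ≤ #{p : F × F | p.1 * p.2 = m} := by
        refine card_le_card_of_injOn (fun p ↦ (p.1 - s + p.2 * z p.1, p.1 - s - p.2 * z p.1))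
          ?_ ?_
        · rintro ⟨c, ε⟩ h
          simp only [coe_product, Set.mem_prod, coe_insert, coe_singleton, Set.mem_insert_iff,
            Set.mem_singleton_iff, mem_coe] at h
          simp only [coe_filter, mem_univ, true_and, Set.mem_ofPred_eq]
          obtain ⟨hc, rfl | rfl⟩ := h <;> linear_combination hzm c hc
        · rintro ⟨c, ε⟩ hc ⟨c', ε'⟩ hc' h
          simp only [Prod.mk.injEq] at h ⊢
          obtain rfl : c = c' :=
            mul_left_cancel₀ two_ne (by linear_combination h.1 + h.2)
          have hc := (mem_product.1 (mem_coe.1 hc)).1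
          exact ⟨rfl, mul_right_cancel₀ (hz0 c hc)
            (mul_left_cancel₀ two_ne (by linear_combination h.1 - h.2))⟩
    _ = Fintype.card F - 1 := card_filter_mul_eq hm

lemma exists_isSquare_sub_sq_and [Fintype F] (hneg : ¬IsSquare (-1 : F)) {m₁ m₂ : F}
    (hm₁ : m₁ ≠ 0) (hm₂ : m₂ ≠ 0) (s₁ s₂ : F) :
    ∃ c, IsSquare (m₁ - (c - s₁) ^ 2) ∧ IsSquare (m₂ - (c - s₂) ^ 2) := by
  have bad₁ := two_mul_card_filter_not_isSquare_le hneg hm₁ s₁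
  have bad₂ := two_mul_card_filter_not_isSquare_le hneg hm₂ s₂
  have hlt : #(({c | ¬IsSquare (m₁ - (c - s₁) ^ 2)} : Finset F) ∪
      ({c | ¬IsSquare (m₂ - (c - s₂) ^ 2)} : Finset F)) < #(univ : Finset F) :=
    (card_union_le _ _).trans_lt <| by
    rw [card_univ]; have := Fintype.card_pos (α := F); omega
  obtain ⟨c, -, hc⟩ := exists_mem_notMem_of_card_lt_card hlt
  simp only [mem_union, mem_filter, mem_univ, true_and, not_or, not_not] at hc
  exact ⟨c, hc⟩

lemma exists_isSquare_archimedes_and [Fintype F] (hneg : ¬IsSquare (-1 : F)) {a₁ a₂ a₃ a₄ : F}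
    (h₁ : a₁ ≠ 0) (h₂ : a₂ ≠ 0) (h₃ : a₃ ≠ 0) (h₄ : a₄ ≠ 0) :
    ∃ c, IsSquare (archimedes a₁ a₂ c) ∧ IsSquare (archimedes a₃ a₄ c) := by
  have four_ne : (4 : F) ≠ 0 := by
    simpa [show (4 : F) = 2 * 2 by norm_num] using two_ne_zero_of_not_isSquare_neg_one_s10 hneg
  simp only [archimedes_eq]
  exact exists_isSquare_sub_sq_and hneg (mul_ne_zero (mul_ne_zero four_ne h₁) h₂)
    (mul_ne_zero (mul_ne_zero four_ne h₃) h₄) _ _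

end

theorem stmt_10_general (F : Type*) [Field F] [Fintype F] (q : ℕ)
    (hcard : Fintype.card F = q) (h4 : q % 4 = 3)
    (a₁ a₂ a₃ a₄ : F) (h₁ : a₁ ≠ 0) (h₂ : a₂ ≠ 0) (h₃ : a₃ ≠ 0) (h₄ : a₄ ≠ 0) :
    ∃ A₁ A₂ A₃ A₄ : F × F,
      quadrance A₁ A₂ = a₁ ∧ quadrance A₂ A₃ = a₂ ∧
      quadrance A₃ A₄ = a₃ ∧ quadrance A₄ A₁ = a₄ := by
  have hneg : ¬IsSquare (-1 : F) := by
    rw [FiniteField.isSquare_neg_one_iff, hcard, h4]; exact fun h ↦ h rfl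
  obtain ⟨c, hc₁₂, hc₃₄⟩ := exists_isSquare_archimedes_and hneg h₁ h₂ h₃ h₄
  obtain ⟨A₃, hA₁₃⟩ := exists_quadrance_eq hneg 0 c
  obtain ⟨A₂, hA₁₂, hA₂₃⟩ := exists_quadrance_eq_quadrance_eq hneg hc₁₂ hA₁₃
  obtain ⟨A₄, hA₃₄, hA₄₁⟩ :=
    exists_quadrance_eq_quadrance_eq hneg hc₃₄ ((quadrance_comm _ _).trans hA₁₃)
  exact ⟨0, A₂, A₃, A₄, hA₁₂, hA₂₃, hA₃₄, hA₄₁⟩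

theorem stmt_10 (F : Type*) [Field F] [Fintype F] (q : ℕ)
    (hcard : Fintype.card F = q) (hodd : Odd q) (h4 : q % 4 = 3)
    (a₁ a₂ a₃ a₄ : F) (h₁ : a₁ ≠ 0) (h₂ : a₂ ≠ 0) (h₃ : a₃ ≠ 0) (h₄ : a₄ ≠ 0) :
    ∃ A₁ A₂ A₃ A₄ : F × F,
      quadrance A₁ A₂ = a₁ ∧ quadrance A₂ A₃ = a₂ ∧
      quadrance A₃ A₄ = a₃ ∧ quadrance A₄ A₁ = a₄ :=
  stmt_10_general F q hcard h4 a₁ a₂ a₃ a₄ h₁ h₂ h₃ h₄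
end

section
/- Let q be an odd prime power with q ≡ 1 (mod 4). Let i, j ∈ F_q be nonzero, and let X, Y ∈ F_q² be distinct points with Q(X,Y) = 0. Then the circles {Z : Q(X,Z) = i} and {Z : Q(Y,Z) = j} intersect if and only if i ≠ j, and when i ≠ j they intersect in exactly one point. -/
/-!
Put `a = Y.1 - X.1`, `b = Y.2 - X.2`, so `a² + b² = 0` with `a, b ≠ 0`, and give a point `Z` with
`Z - X = (u, v)` the isotropic coordinates `p = a u + b v`, `r = a u - b v`, which determine `Z`
when `2 ≠ 0`. Since `b² = -a²`, the two circles become `p r = a² i` (a hyperbola) and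
`2 p = i - j` (a line parallel to its asymptote `p = 0`). Such a line meets the hyperbola in
exactly one point unless it is the asymptote itself, i.e. unless `i = j`.
-/

open scoped Classical

open Function

theorem two_ne_zero_of_odd_card {F : Type*} [Field F] [Fintype F] (h : Odd (Fintype.card F)) :
    (2 : F) ≠ 0 :=
  Ring.two_ne_zero fun hF => by
    have := FiniteField.even_card_of_char_two hF
    rw [Nat.odd_iff] at h
    omega

section Hyperbola

variable {F : Type*} [Field F] {p k : F}

theorem exists_fst_eq_and_fst_mul_snd_eq_iff (hk : k ≠ 0) :
    (∃ w : F × F, w.1 = p ∧ w.1 * w.2 = k) ↔ p ≠ 0 := by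
  constructor
  · rintro ⟨⟨w₁, w₂⟩, rfl, hw⟩ rfl
    exact hk (by simpa using hw.symm)
  · intro hp
    exact ⟨(p, k / p), rfl, mul_div_cancel₀ k hp⟩

theorem card_fst_eq_and_fst_mul_snd_eq (hp : p ≠ 0) :
    Nat.card {w : F × F // w.1 = p ∧ w.1 * w.2 = k} = 1 := by
  rw [Nat.card_eq_one_iff_exists]
  refine ⟨⟨(p, k / p), rfl, mul_div_cancel₀ k hp⟩, ?_⟩
  rintro ⟨⟨w₁, w₂⟩, rfl, hw⟩
  ext
  · rfl
  · exact (eq_div_iff_mul_eq hp).mpr (by rw [mul_comm, hw])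

end Hyperbola

section Isotropic

variable {F : Type*} [Field F]

def isotropicCoords (X Y Z : F × F) : F × F :=
  ((Y.1 - X.1) * (Z.1 - X.1) + (Y.2 - X.2) * (Z.2 - X.2),
    (Y.1 - X.1) * (Z.1 - X.1) - (Y.2 - X.2) * (Z.2 - X.2))

variable {X Y : F × F}

theorem sub_ne_zero_of_quadrance_eq_zero (hXY : X ≠ Y) (h0 : quadrance X Y = 0) :
    Y.1 - X.1 ≠ 0 ∧ Y.2 - X.2 ≠ 0 := by
  unfold quadrance at h0
  have hiff : Y.1 - X.1 = 0 ↔ Y.2 - X.2 = 0 := by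
    constructor <;> intro h <;> rw [h] at h0 <;> simpa using h0
  have hboth : ¬(Y.1 - X.1 = 0 ∧ Y.2 - X.2 = 0) := fun ⟨h₁, h₂⟩ =>
    hXY (Prod.ext (sub_eq_zero.mp h₁).symm (sub_eq_zero.mp h₂).symm)
  tauto

theorem quadrance_right_eq_of_quadrance_eq_zero (h0 : quadrance X Y = 0) (Z : F × F) :
    quadrance Y Z = quadrance X Z - 2 * (isotropicCoords X Y Z).1 := by
  unfold quadrance isotropicCoords at *
  linear_combination h0

theorem sq_mul_quadrance_eq_of_quadrance_eq_zero (h0 : quadrance X Y = 0) (Z : F × F) :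
    (Y.1 - X.1) ^ 2 * quadrance X Z = (isotropicCoords X Y Z).1 * (isotropicCoords X Y Z).2 := by
  unfold quadrance isotropicCoords at *
  linear_combination (Z.2 - X.2) ^ 2 * h0

theorem isotropicCoords_bijective (h2 : (2 : F) ≠ 0) (hXY : X ≠ Y) (h0 : quadrance X Y = 0) :
    Bijective (isotropicCoords X Y) := by
  obtain ⟨ha, hb⟩ := sub_ne_zero_of_quadrance_eq_zero hXY h0
  refine bijective_iff_has_inverse.mpr
    ⟨fun w => (X.1 + (w.1 + w.2) / (2 * (Y.1 - X.1)), X.2 + (w.1 - w.2) / (2 * (Y.2 - X.2))),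
      fun Z => ?_, fun w => ?_⟩ <;>
  · simp only [isotropicCoords]
    ext <;> field_simp <;> ring

theorem quadrance_eq_and_quadrance_eq_iff (h2 : (2 : F) ≠ 0) (hXY : X ≠ Y)
    (h0 : quadrance X Y = 0) (i j : F) (Z : F × F) :
    quadrance X Z = i ∧ quadrance Y Z = j ↔
      (isotropicCoords X Y Z).1 = (i - j) / 2 ∧
        (isotropicCoords X Y Z).1 * (isotropicCoords X Y Z).2 = (Y.1 - X.1) ^ 2 * i := by
  have ha := (sub_ne_zero_of_quadrance_eq_zero hXY h0).1
  rw [quadrance_right_eq_of_quadrance_eq_zero h0, ← sq_mul_quadrance_eq_of_quadrance_eq_zero h0,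
    eq_div_iff h2, mul_right_inj' (pow_ne_zero 2 ha)]
  constructor
  · rintro ⟨rfl, rfl⟩
    exact ⟨by ring, rfl⟩
  · rintro ⟨hp, rfl⟩
    exact ⟨rfl, by linear_combination -hp⟩

end Isotropic

theorem stmt_11_general (F : Type*) [Field F] [Fintype F] (q : ℕ)
    (hcard : Fintype.card F = q) (hodd : Odd q)
    (i j : F) (hi : i ≠ 0)
    (X Y : F × F) (hXY : X ≠ Y) (h0 : quadrance X Y = 0) :
    ((∃ Z : F × F, quadrance X Z = i ∧ quadrance Y Z = j) ↔ i ≠ j) ∧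
    (i ≠ j → Nat.card {Z : F × F // quadrance X Z = i ∧ quadrance Y Z = j} = 1) := by
  have h2 : (2 : F) ≠ 0 := two_ne_zero_of_odd_card (hcard ▸ hodd)
  have hk : (Y.1 - X.1) ^ 2 * i ≠ 0 :=
    mul_ne_zero (pow_ne_zero 2 (sub_ne_zero_of_quadrance_eq_zero hXY h0).1) hi
  have hp : (i - j) / 2 ≠ 0 ↔ i ≠ j := by
    rw [div_ne_zero_iff, sub_ne_zero]
    exact and_iff_left h2
  let e := Equiv.ofBijective _ (isotropicCoords_bijective h2 hXY h0)
  have hiff := quadrance_eq_and_quadrance_eq_iff h2 hXY h0 i j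
  refine ⟨?_, fun hij => ?_⟩
  · rw [← hp, ← exists_fst_eq_and_fst_mul_snd_eq_iff hk]
    exact e.exists_congr hiff
  · rw [Nat.card_congr (e.subtypeEquiv (q := fun w => w.1 = _ ∧ w.1 * w.2 = _) hiff)]
    exact card_fst_eq_and_fst_mul_snd_eq (hp.mpr hij)

theorem stmt_11 (F : Type*) [Field F] [Fintype F] (q : ℕ)
    (hcard : Fintype.card F = q) (hodd : Odd q) (h4 : q % 4 = 1)
    (i j : F) (hi : i ≠ 0) (hj : j ≠ 0)
    (X Y : F × F) (hXY : X ≠ Y) (h0 : quadrance X Y = 0) :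
    ((∃ Z : F × F, quadrance X Z = i ∧ quadrance Y Z = j) ↔ i ≠ j) ∧
    (i ≠ j → Nat.card {Z : F × F // quadrance X Z = i ∧ quadrance Y Z = j} = 1) :=
  stmt_11_general F q hcard hodd i j hi X Y hXY h0
end

section
/- Let q be an odd prime power with q ≡ 1 (mod 4), and define f(i,j,k) = ij - (i-j-k)²/4. For every nonzero i ∈ F_q, there exists a nonzero j ∈ F_q such that both f(i,i,j) and f(j,j,i) are squares in F_q. -/
/-!
With `j = i t` both quantities are `(i / 2)²` times `4 - t²` and `4 t² - 1 = t² (4 - t⁻²)`, so one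
needs `t ≠ 0` with `t ∈ A` and `t⁻¹ ∈ A`, where `A = {t ≠ 0 | 4 - t² is a square}`. Since `-1` is a
square, `4 - (v + v⁻¹)² = -(v - v⁻¹)²` is a square, and `v ↦ v + v⁻¹` is at most two-to-one, so
`A` has at least half as many elements as `S = {v ≠ 0 | v² ≠ -1}`. If `A` and `A⁻¹` were disjoint,
they could not contain any `t` with `t⁴ = 1` (for those `t⁻² = t²`), so `A ∪ A⁻¹ ⊆ S \ {1}`,
which is too small to hold `2 |A|` elements.
-/

open Finset
open scoped Pointwise

section Field

variable {F : Type*} [Field F]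

lemma isSquare_four_sub_sq_add_inv (hneg : IsSquare (-1 : F)) {v : F} (hv : v ≠ 0) :
    IsSquare (4 - (v + v⁻¹) ^ 2) := by
  obtain ⟨i, hi⟩ := hneg
  refine ⟨i * (v - v⁻¹), ?_⟩
  linear_combination (-4 : F) * mul_inv_cancel₀ hv + (v - v⁻¹) ^ 2 * hi

lemma add_inv_ne_zero {v : F} (hv : v ≠ 0) (hv2 : v ^ 2 ≠ -1) : v + v⁻¹ ≠ 0 := by
  intro h
  apply hv2
  linear_combination v * h - mul_inv_cancel₀ hv

lemma eq_or_eq_inv_of_add_inv_eq {v w : F} (hv : v ≠ 0) (hw : w ≠ 0)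
    (h : w + w⁻¹ = v + v⁻¹) : w = v ∨ w = v⁻¹ := by
  have hprod : (w - v) * (w * v - 1) = 0 := by
    linear_combination w * v * h - v * mul_inv_cancel₀ hw + w * mul_inv_cancel₀ hv
  rcases mul_eq_zero.mp hprod with h' | h'
  · exact .inl (sub_eq_zero.mp h')
  · exact .inr (eq_inv_of_mul_eq_one_left (sub_eq_zero.mp h'))

end Field

section FiniteField

open scoped Classical

variable (F : Type*) [Field F] [Fintype F]

/-- The nonzero first coordinates of the points of the circle `t² + s² = 4`. -/
noncomputable def circleAbscissas : Finset F := {t | t ≠ 0 ∧ IsSquare (4 - t ^ 2)}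

variable {F}

@[simp]
lemma mem_circleAbscissas {t : F} : t ∈ circleAbscissas F ↔ t ≠ 0 ∧ IsSquare (4 - t ^ 2) := by
  simp [circleAbscissas]

lemma card_le_two_mul_card_circleAbscissas (hneg : IsSquare (-1 : F)) :
    #{v : F | v ≠ 0 ∧ v ^ 2 ≠ -1} ≤ 2 * #(circleAbscissas F) := by
  refine card_le_mul_card_image_of_maps_to (f := fun v => v + v⁻¹) ?_ 2 ?_
  · intro v hv
    simp only [mem_filter, mem_univ, true_and] at hv
    rw [mem_circleAbscissas]
    exact ⟨add_inv_ne_zero hv.1 hv.2, isSquare_four_sub_sq_add_inv hneg hv.1⟩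
  · intro b _
    rcases (filter (fun v => v + v⁻¹ = b) {v : F | v ≠ 0 ∧ v ^ 2 ≠ -1}).eq_empty_or_nonempty
      with hempty | ⟨v, hv⟩
    · simp [hempty]
    simp only [mem_filter, mem_univ, true_and] at hv
    calc _ ≤ #{v, v⁻¹} := card_le_card fun w hw => by
            simp only [mem_filter, mem_univ, true_and] at hw
            simpa using eq_or_eq_inv_of_add_inv_eq hv.1.1 hw.1.1 (hw.2.trans hv.2.symm)
      _ ≤ 2 := card_le_two

lemma inv_mem_circleAbscissas_iff {t : F} (ht : t⁻¹ ^ 2 = t ^ 2) :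
    t⁻¹ ∈ circleAbscissas F ↔ t ∈ circleAbscissas F := by
  simp only [mem_circleAbscissas, ne_eq, inv_eq_zero, ht]

lemma exists_isSquare_four_sub_sq_and_four_mul_sq_sub_one (h2 : (2 : F) ≠ 0)
    (hneg : IsSquare (-1 : F)) :
    ∃ t : F, t ≠ 0 ∧ IsSquare (4 - t ^ 2) ∧ IsSquare (4 * t ^ 2 - 1) := by
  set A := circleAbscissas F
  suffices hmeet : (A ∩ A⁻¹).Nonempty by
    obtain ⟨t, ht⟩ := hmeet
    rw [mem_inter, mem_inv', mem_circleAbscissas, mem_circleAbscissas] at ht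
    obtain ⟨⟨ht0, hA⟩, -, hAinv⟩ := ht
    refine ⟨t, ht0, hA, ?_⟩
    have hfactor : 4 * t ^ 2 - 1 = t ^ 2 * (4 - t⁻¹ ^ 2) := by field_simp
    exact hfactor ▸ (IsSquare.sq t).mul hAinv
  by_contra hdisj
  rw [not_nonempty_iff_eq_empty, ← disjoint_iff_inter_eq_empty] at hdisj
  set S : Finset F := {v | v ≠ 0 ∧ v ^ 2 ≠ -1}
  have hone : (1 : F) ∈ S := by
    simp only [S, mem_filter, mem_univ, true_and]
    refine ⟨one_ne_zero, fun h => h2 ?_⟩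
    linear_combination h
  have hsub : A ∪ A⁻¹ ⊆ S.erase 1 := by
    intro t ht
    have ht0 : t ≠ 0 := by
      rcases mem_union.mp ht with h | h
      · exact (mem_circleAbscissas.mp h).1
      · exact inv_eq_zero.not.mp (mem_circleAbscissas.mp (mem_inv'.mp h)).1
    have hsym : t⁻¹ ^ 2 = t ^ 2 → False := fun h => by
      rcases mem_union.mp ht with h' | h'
      · exact disjoint_left.mp hdisj h' (mem_inv'.mpr ((inv_mem_circleAbscissas_iff h).mpr h'))
      · exact disjoint_left.mp hdisj ((inv_mem_circleAbscissas_iff h).mp (mem_inv'.mp h')) h'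
    simp only [S, mem_erase, mem_filter, mem_univ, true_and]
    refine ⟨fun h1 => hsym (by simp [h1]), ht0, fun hsq => hsym ?_⟩
    rw [inv_pow, hsq]
    norm_num
  have hcard : 2 * #A ≤ #S - 1 := calc
    2 * #A = #(A ∪ A⁻¹) := by rw [card_union_of_disjoint hdisj, card_inv, two_mul]
    _ ≤ #(S.erase 1) := card_le_card hsub
    _ = #S - 1 := card_erase_of_mem hone
  have hlow : #S ≤ 2 * #A := card_le_two_mul_card_circleAbscissas hneg
  have hpos : 0 < #S := card_pos.mpr ⟨1, hone⟩
  omega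

end FiniteField

theorem stmt_12_general (F : Type*) [Field F] [Fintype F] (q : ℕ)
    (hcard : Fintype.card F = q) (h4 : q % 4 = 1)
    (i : F) (hi : i ≠ 0) :
    ∃ j : F, j ≠ 0 ∧
      IsSquare (i * i - (i - i - j) ^ 2 / 4) ∧
      IsSquare (j * j - (j - j - i) ^ 2 / 4) := by
  have h2 : (2 : F) ≠ 0 := Ring.two_ne_zero fun h => by
    have := FiniteField.even_card_iff_char_two.mp h
    omega
  have hneg : IsSquare (-1 : F) := FiniteField.isSquare_neg_one_iff.mpr (by omega)
  have h4F : (4 : F) ≠ 0 := by simpa [show (4 : F) = 2 * 2 by norm_num] using h2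
  obtain ⟨t, ht0, ⟨a, ha⟩, ⟨b, hb⟩⟩ := exists_isSquare_four_sub_sq_and_four_mul_sq_sub_one h2 hneg
  refine ⟨i * t, mul_ne_zero hi ht0, ⟨i / 2 * a, ?_⟩, ⟨i / 2 * b, ?_⟩⟩
  · field_simp
    linear_combination 4 * ha
  · field_simp
    linear_combination 4 * hb

theorem stmt_12 (F : Type*) [Field F] [Fintype F] (q : ℕ)
    (hcard : Fintype.card F = q) (hodd : Odd q) (h4 : q % 4 = 1)
    (i : F) (hi : i ≠ 0) :
    ∃ j : F, j ≠ 0 ∧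
      IsSquare (i * i - (i - i - j) ^ 2 / 4) ∧
      IsSquare (j * j - (j - j - i) ^ 2 / 4) :=
  stmt_12_general F q hcard h4 i hi
end

section
/- Let q be an odd prime power with q ≡ 3 (mod 4). Let X, Y ∈ F_q² be distinct points with Q(X,Y) a nonsquare in F_q. Then the number of points Z ∈ F_q² such that both Q(X,Z) and Q(Y,Z) are nonzero squares equals (q² - 1)/4. -/
open scoped Classical

/-!
Since `q ≡ 3 (mod 4)`, `-1` is not a square in `F`, so `K = F(i)` is the field with `q²`
elements and `(x, y) ↦ x + y i` identifies the plane `F²` with `K` additively, turning the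
quadrance `Q(A, B)` into the norm of `B - A`. As the norm `K → F` is `z ↦ z ^ (q + 1)`, Euler's
criterion shows that `z` is a square in `K` iff its norm is a square in `F`. The count becomes the
number `N` of `w ∈ K` with `w` and `w - u` nonzero squares, where `u`, the image of `Y - X`,
is a nonsquare of `K`. Since `-1` is a square in `K`, expanding `∑ (1 + χ w) (1 + χ (w - u))`
with the quadratic character `χ` and evaluating the Jacobi sum `∑ χ w χ (w - u) = -1` gives
`4 N = q² - 1`.
-/

open Finset

section QuadraticChar

variable {K : Type*} [Field K] [Fintype K]

theorem sum_quadraticChar_mul_quadraticChar_sub (hK : ringChar K ≠ 2) {u : K} (hu : u ≠ 0) :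
    ∑ w : K, quadraticChar K w * quadraticChar K (w - u) = -1 := by
  set χ := quadraticChar K
  have hχ1 : χ (-1) ^ 2 = 1 := quadraticChar_sq_one (neg_ne_zero.mpr one_ne_zero)
  have hjac : jacobiSum χ χ = -χ (-1) := by
    simpa only [(quadraticChar_isQuadratic K).inv] using
      jacobiSum_nontrivial_inv (quadraticChar_ne_one hK)
  calc ∑ w : K, χ w * χ (w - u) = ∑ x : K, χ (u * x) * χ (u * x - u) :=
        (Fintype.sum_equiv (Equiv.mulLeft₀ u hu) _ _ fun _ => rfl).symm
    _ = ∑ x : K, χ (-1) * (χ x * χ (1 - x)) := by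
        refine Fintype.sum_congr _ _ fun x => ?_
        rw [show u * x - u = u * (-1) * (1 - x) by ring, map_mul, map_mul, map_mul]
        linear_combination χ x * χ (-1) * χ (1 - x) * quadraticChar_sq_one hu
    _ = -1 := by rw [← mul_sum, ← jacobiSum, hjac]; linear_combination -hχ1

theorem one_add_quadraticChar_of_ne_zero {a : K} (ha : a ≠ 0) :
    1 + quadraticChar K a = if IsSquare a then 2 else 0 := by
  split_ifs with h
  · rw [(quadraticChar_one_iff_isSquare ha).mpr h]; norm_num
  · rw [quadraticChar_neg_one_iff_not_isSquare.mpr h]; norm_num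

theorem one_add_quadraticChar_mul_one_add_quadraticChar_sub (hK : IsSquare (-1 : K)) {u : K}
    (hu : ¬ IsSquare u) (w : K) :
    (1 + quadraticChar K w) * (1 + quadraticChar K (w - u)) =
      if (IsSquare w ∧ w ≠ 0) ∧ (IsSquare (w - u) ∧ w - u ≠ 0) then 4 else 0 := by
  have hχu : quadraticChar K u = -1 := quadraticChar_neg_one_iff_not_isSquare.mpr hu
  by_cases hw : w = 0
  · have hχ1 : quadraticChar K (-1) = 1 := (quadraticChar_one_iff_isSquare (by simp)).mpr hK
    have hχu' : quadraticChar K (-u) = -1 := by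
      rw [neg_eq_neg_one_mul, map_mul, hχ1, hχu, one_mul]
    simp [hw, hχu']
  by_cases hwu : w - u = 0
  · simp [sub_eq_zero.mp hwu, hχu]
  rw [one_add_quadraticChar_of_ne_zero hw, one_add_quadraticChar_of_ne_zero hwu]
  split_ifs <;> simp_all

theorem card_isSquare_and_sub_isSquare (hK : Fintype.card K % 4 = 1) {u : K}
    (hu : ¬ IsSquare u) :
    Nat.card {w : K // (IsSquare w ∧ w ≠ 0) ∧ (IsSquare (w - u) ∧ w - u ≠ 0)} =
      (Fintype.card K - 1) / 4 := by
  have hchar : ringChar K ≠ 2 := fun h => by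
    have := FiniteField.even_card_of_char_two h
    omega
  have hu0 : u ≠ 0 := by rintro rfl; exact hu IsSquare.zero
  have hsum := Finset.sum_congr rfl fun w (_ : w ∈ univ) =>
    one_add_quadraticChar_mul_one_add_quadraticChar_sub
      (FiniteField.isSquare_neg_one_iff.mpr (by omega)) hu w
  rw [Finset.sum_ite, sum_const, sum_const_zero, add_zero, nsmul_eq_mul] at hsum
  have hexpand : ∑ w : K, (1 + quadraticChar K w) * (1 + quadraticChar K (w - u)) =
      Fintype.card K + ∑ w : K, quadraticChar K w + ∑ w : K, quadraticChar K (w - u) +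
        ∑ w : K, quadraticChar K w * quadraticChar K (w - u) := by
    simp only [add_mul, one_mul, mul_add, mul_one, sum_add_distrib, sum_const, card_univ,
      nsmul_eq_mul]
    ring
  have hshift : ∑ w : K, quadraticChar K (w - u) = ∑ w : K, quadraticChar K w :=
    Fintype.sum_equiv (Equiv.subRight u) _ _ fun _ => rfl
  rw [hexpand, hshift, quadraticChar_sum_zero hchar,
    sum_quadraticChar_mul_quadraticChar_sub hchar hu0] at hsum
  rw [Nat.card_eq_fintype_card, Fintype.card_subtype]
  omega

end QuadraticChar

theorem FiniteField.isSquare_norm_iff {F K : Type*} [Field F] [Fintype F] [Field K] [Fintype K]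
    [Algebra F K] (hF : ringChar F ≠ 2) (z : K) :
    IsSquare (Algebra.norm F z) ↔ IsSquare z := by
  rcases eq_or_ne z 0 with rfl | hz
  · simp
  have hK : ringChar K ≠ 2 := Algebra.ringChar_eq F K ▸ hF
  set q := Fintype.card F
  obtain ⟨n, hn⟩ : ∃ n, Fintype.card K = q ^ n := ⟨_, Module.card_eq_pow_finrank⟩
  have hq : q % 2 = 1 := odd_card_of_char_ne_two hF
  have hexp : (q ^ n - 1) / (q - 1) * (q / 2) = q ^ n / 2 := by
    obtain ⟨d, hd⟩ : q - 1 ∣ q ^ n - 1 := by simpa using Nat.sub_dvd_pow_sub_pow q 1 n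
    have hqn : q ^ n % 2 = 1 := by simp [Nat.pow_mod, hq]
    have hq1 : 0 < q - 1 := by have := Fintype.one_lt_card (α := F); omega
    obtain ⟨k, hk⟩ : ∃ k, q = 2 * k + 1 := ⟨q / 2, by omega⟩
    rw [hd, Nat.mul_div_cancel_left _ hq1, show q ^ n / 2 = (q - 1) * d / 2 by omega, hk,
      show (2 * k + 1) / 2 = k by omega, Nat.add_sub_cancel, mul_assoc,
      Nat.mul_div_cancel_left _ two_pos, mul_comm]
  have hpow : algebraMap F K (Algebra.norm F z ^ (q / 2)) = z ^ (Fintype.card K / 2) := by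
    rw [map_pow, algebraMap_norm_eq_pow, ← Fintype.card_eq_nat_card, ← Fintype.card_eq_nat_card,
      ← pow_mul, hn, hexp]
  rw [isSquare_iff hF (Algebra.norm_ne_zero_iff.mpr hz), isSquare_iff hK hz, ← hpow,
    (algebraMap F K).injective.eq_iff' (map_one _)]

open Polynomial

/-- `F(i)`; it is a field under the instance `Fact (Irreducible (X ^ 2 - C (-1)))`, i.e. when `-1`
is not a square in `F`. -/
abbrev GaussianExtension (F : Type*) [Field F] := AdjoinRoot (X ^ 2 - C (-1) : F[X])

namespace GaussianExtension

variable {F : Type*} [Field F]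

theorem irreducible_X_sq_sub_C_neg_one (h : ¬ IsSquare (-1 : F)) :
    Irreducible (X ^ 2 - C (-1) : F[X]) :=
  X_pow_sub_C_irreducible_of_prime Nat.prime_two fun b hb => h ⟨b, by rw [← hb, sq]⟩

theorem root_sq : AdjoinRoot.root (X ^ 2 - C (-1) : F[X]) ^ 2 = -1 := by
  have h := AdjoinRoot.mk_self (f := (X ^ 2 - C (-1) : F[X]))
  rw [map_sub, map_pow, AdjoinRoot.mk_X, AdjoinRoot.mk_C, sub_eq_zero] at h
  exact h.trans (by simp)

variable [Fact (Irreducible (X ^ 2 - C (-1) : F[X]))]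

noncomputable def basis : Module.Basis (Fin 2) F (GaussianExtension F) :=
  let pb := AdjoinRoot.powerBasis (Fact.out : Irreducible (X ^ 2 - C (-1) : F[X])).ne_zero
  pb.basis.reindex (finCongr (natDegree_X_pow_sub_C : pb.dim = 2))

noncomputable def equivProd : (F × F) ≃ₗ[F] GaussianExtension F :=
  (LinearEquiv.finTwoArrow F F).symm ≪≫ₗ basis.equivFun.symm

theorem equivProd_apply (w : F × F) :
    equivProd w = algebraMap F _ w.1 + algebraMap F _ w.2 * AdjoinRoot.root _ := by
  simp only [equivProd, basis, LinearEquiv.trans_apply, Module.Basis.equivFun_symm_apply,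
    Fin.sum_univ_two, Module.Basis.reindex_apply, PowerBasis.basis_eq_pow,
    LinearEquiv.finTwoArrow_symm_apply]
  change w.1 • AdjoinRoot.root _ ^ 0 + w.2 • AdjoinRoot.root _ ^ 1 = _
  rw [pow_zero, pow_one, Algebra.smul_def, Algebra.smul_def, mul_one]

variable [Fintype F]

noncomputable instance : Fintype (GaussianExtension F) := Fintype.ofEquiv _ equivProd.toEquiv

theorem card_eq : Fintype.card (GaussianExtension F) = Fintype.card F ^ 2 := by
  rw [← Fintype.card_congr equivProd.toEquiv, Fintype.card_prod, sq]

theorem root_pow_card (hq : Fintype.card F % 4 = 3) :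
    AdjoinRoot.root (X ^ 2 - C (-1) : F[X]) ^ Fintype.card F = -AdjoinRoot.root _ := by
  obtain ⟨k, hk⟩ : ∃ k, Fintype.card F = 2 * (2 * k + 1) + 1 :=
    ⟨Fintype.card F / 4, by omega⟩
  rw [hk, pow_succ _ (2 * (2 * k + 1)), pow_mul _ 2 (2 * k + 1), root_sq,
    Odd.neg_one_pow ⟨k, rfl⟩, neg_one_mul]

theorem norm_equivProd (hq : Fintype.card F % 4 = 3) (w : F × F) :
    Algebra.norm F (equivProd w) = w.1 ^ 2 + w.2 ^ 2 := by
  set q := Fintype.card F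
  have hconj : equivProd w ^ q =
      algebraMap F _ w.1 - algebraMap F _ w.2 * AdjoinRoot.root (X ^ 2 - C (-1) : F[X]) := by
    change FiniteField.frobeniusAlgHom F _ (equivProd w) = _
    rw [equivProd_apply, map_add, map_mul, AlgHom.commutes, AlgHom.commutes,
      FiniteField.frobeniusAlgHom_apply, root_pow_card hq, mul_neg, ← sub_eq_add_neg]
  have hexp : (Nat.card (GaussianExtension F) - 1) / (Nat.card F - 1) = q + 1 := by
    rw [Nat.card_eq_fintype_card, Nat.card_eq_fintype_card, card_eq,
      show q ^ 2 - 1 = (q + 1) * (q - 1) by simpa using Nat.sq_sub_sq q 1,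
      Nat.mul_div_cancel _ (Nat.sub_pos_of_lt (Fintype.one_lt_card (α := F)))]
  apply (algebraMap F (GaussianExtension F)).injective
  rw [FiniteField.algebraMap_norm_eq_pow, hexp, pow_succ, hconj, equivProd_apply]
  simp only [map_add, map_pow]
  linear_combination (-algebraMap F (GaussianExtension F) w.2 ^ 2) * root_sq (F := F)

theorem quadrance_eq_norm (hq : Fintype.card F % 4 = 3) (A B : F × F) :
    quadrance A B = Algebra.norm F (equivProd (B - A)) := by
  rw [norm_equivProd hq]; rfl

end GaussianExtension

theorem stmt_16_general (F : Type*) [Field F] [Fintype F] (q : ℕ)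
    (hcard : Fintype.card F = q) (h4 : q % 4 = 3)
    (X Y : F × F) (hns : ¬ IsSquare (quadrance X Y)) :
    Nat.card {Z : F × F //
        (IsSquare (quadrance X Z) ∧ quadrance X Z ≠ 0) ∧
        (IsSquare (quadrance Y Z) ∧ quadrance Y Z ≠ 0)} = (q ^ 2 - 1) / 4 := by
  open GaussianExtension in
  subst hcard
  have hF : ringChar F ≠ 2 := fun h => by
    have := FiniteField.even_card_of_char_two h
    omega
  have := Fact.mk <| irreducible_X_sq_sub_C_neg_one (F := F) <| by
    rw [FiniteField.isSquare_neg_one_iff]; omega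
  have hsq : ∀ A B : F × F, IsSquare (quadrance A B) ↔ IsSquare (equivProd (B - A)) :=
    fun A B => by rw [quadrance_eq_norm h4, FiniteField.isSquare_norm_iff hF]
  have hne : ∀ A B : F × F, quadrance A B ≠ 0 ↔ equivProd (B - A) ≠ 0 := fun A B => by
    rw [quadrance_eq_norm h4, Algebra.norm_ne_zero_iff]
  have hshift : ∀ Z, equivProd (Z - Y) = equivProd (Z - X) - equivProd (Y - X) := fun Z => by
    rw [← map_sub, sub_sub_sub_cancel_right]
  rw [← card_eq, ← card_isSquare_and_sub_isSquare (by rw [card_eq, Nat.pow_mod, h4])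
    ((hsq X Y).not.mp hns)]
  exact Nat.card_congr <| ((Equiv.subRight X).trans equivProd.toEquiv).subtypeEquiv fun Z => by
    simp only [Equiv.trans_apply, Equiv.subRight_apply, LinearEquiv.coe_toEquiv, hsq, hne,
      hshift]

theorem stmt_16 (F : Type*) [Field F] [Fintype F] (q : ℕ)
    (hcard : Fintype.card F = q) (hodd : Odd q) (h4 : q % 4 = 3)
    (X Y : F × F) (hXY : X ≠ Y) (hns : ¬ IsSquare (quadrance X Y)) :
    Nat.card {Z : F × F //
        (IsSquare (quadrance X Z) ∧ quadrance X Z ≠ 0) ∧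
        (IsSquare (quadrance Y Z) ∧ quadrance Y Z ≠ 0)} = (q ^ 2 - 1) / 4 :=
  stmt_16_general F q hcard h4 X Y hns
end

section
/- Let q be an odd prime power with q ≡ 3 (mod 4). Every vertex of the quadrance graph V_q has degree exactly (q² - 1)/2; that is, for each X ∈ F_q², the number of Y ∈ F_q² such that Q(X,Y) is a nonzero square equals (q² - 1)/2. -/
/-!
Identify `F × F` with `F[i] = QuadraticAlgebra F (-1) 0`, so that `quadrance X Y` is the norm of
`Y - X`. Since `q ≡ 3 (mod 4)`, `-1` is not a square, so the norm vanishes only at `0`. Every element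
of `F` is a sum of two squares, so some `w` has a nonsquare norm, and multiplication by `w` swaps
the elements whose norm is a nonzero square with those whose norm is a nonsquare. Hence each class
has half of the `q² - 1` nonzero elements.
-/

open scoped Classical

namespace FiniteField

variable {F : Type*} [Field F] [Fintype F]

theorem exists_sq_add_sq_eq (hF : Fintype.card F % 2 = 1) (x : F) :
    ∃ a b : F, a ^ 2 + b ^ 2 = x := by
  open Polynomial in
  obtain ⟨a, b, hab⟩ := exists_root_sum_quadratic (degree_X_pow 2)
    (degree_X_pow_sub_C two_pos x) hF
  refine ⟨a, b, ?_⟩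
  simp only [eval_pow, eval_X, eval_sub, eval_C] at hab
  linear_combination hab

theorem isSquare_mul_and_ne_zero_iff {a b : F} (ha : ¬IsSquare a) :
    IsSquare (a * b) ∧ a * b ≠ 0 ↔ ¬IsSquare b := by
  have ha0 : a ≠ 0 := by rintro rfl; exact ha .zero
  rw [← quadraticChar_neg_one_iff_not_isSquare] at ha ⊢
  by_cases hb : b = 0
  · simp [hb]
  rw [← quadraticChar_one_iff_isSquare (mul_ne_zero ha0 hb), map_mul, ha]
  simp only [ne_eq, mul_eq_zero, ha0, hb, or_self, not_false_eq_true, and_true]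
  constructor <;> intro h <;> linarith

end FiniteField

theorem MonoidHom.two_mul_card_isSquare_and_ne_zero {K F : Type*} [Monoid K] [Finite K]
    [Field F] [Fintype F] (N : K →* F) (w : Kˣ) (hw : ¬IsSquare (N w)) :
    2 * Nat.card {z // IsSquare (N z) ∧ N z ≠ 0} = Nat.card {z // N z ≠ 0} := by
  have hswap : {z // ¬IsSquare (N z)} ≃ {z // IsSquare (N z) ∧ N z ≠ 0} :=
    (Units.mulLeft w).subtypeEquiv fun z => by
      rw [Units.mulLeft_apply, map_mul, FiniteField.isSquare_mul_and_ne_zero_iff hw]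
  have hsplit :
      {z // N z ≠ 0} ≃ {z // IsSquare (N z) ∧ N z ≠ 0} ⊕ {z // ¬IsSquare (N z)} := by
    refine (Equiv.subtypeEquivRight fun z => ?_).trans (subtypeOrEquiv _ _ ?_)
    · by_cases h : IsSquare (N z)
      · simp [h]
      · simp only [h, false_and, not_false_eq_true, or_true, iff_true]
        rintro h0; exact h (h0 ▸ .zero)
    · exact Pi.disjoint_iff.mpr fun z => Prop.disjoint_iff.mpr fun h => h.2 h.1.1
  rw [Nat.card_congr hsplit, Nat.card_sum, ← Nat.card_congr hswap]
  ring

namespace QuadraticAlgebra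

instance {R : Type*} [Finite R] {a b : R} : Finite (QuadraticAlgebra R a b) :=
  .of_equiv _ (equivProd a b).symm

variable {F : Type*} [Field F]

theorem norm_eq_re_sq_add_im_sq (z : QuadraticAlgebra F (-1) 0) :
    norm z = z.re ^ 2 + z.im ^ 2 := by
  rw [norm_def]; ring

theorem fact_sq_ne_neg_one (h : ¬IsSquare (-1 : F)) : Fact (∀ r : F, r ^ 2 ≠ -1 + 0 * r) :=
  ⟨fun r hr => h ⟨r, by linear_combination -hr⟩⟩

theorem card_norm_ne_zero [Finite F] {a b : F} [Fact (∀ r, r ^ 2 ≠ a + b * r)] :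
    Nat.card {z : QuadraticAlgebra F a b // norm z ≠ 0} = Nat.card F ^ 2 - 1 := by
  simp_rw [ne_eq, norm_eq_zero_iff_eq_zero]
  rw [← Nat.card_congr unitsEquivNeZero, Nat.card_units, Nat.card_congr (equivProd _ _),
    Nat.card_prod, sq]

theorem exists_not_isSquare_norm [Fintype F] (hF : ringChar F ≠ 2) :
    ∃ w : QuadraticAlgebra F (-1) 0, ¬IsSquare (norm w) := by
  obtain ⟨n, hn⟩ := FiniteField.exists_nonsquare hF
  obtain ⟨a, b, rfl⟩ := FiniteField.exists_sq_add_sq_eq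
    (Nat.mod_two_ne_zero.mp (mt FiniteField.even_card_iff_char_two.mpr hF)) n
  exact ⟨⟨a, b⟩, by rwa [norm_eq_re_sq_add_im_sq]⟩

end QuadraticAlgebra

theorem card_subtype_quadrance {F : Type*} [Field F] (X : F × F) (P : F → Prop) :
    Nat.card {Y : F × F // P (quadrance X Y)} =
      Nat.card {z : QuadraticAlgebra F (-1) 0 // P (QuadraticAlgebra.norm z)} :=
  Nat.card_congr <| ((Equiv.subRight X).trans (QuadraticAlgebra.equivProd _ _).symm).subtypeEquiv
    fun Y => by rw [QuadraticAlgebra.norm_eq_re_sq_add_im_sq]; rfl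

theorem stmt_18_general (F : Type*) [Field F] [Fintype F] (q : ℕ)
    (hcard : Fintype.card F = q) (h4 : q % 4 = 3)
    (X : F × F) :
    Nat.card {Y : F × F // IsSquare (quadrance X Y) ∧ quadrance X Y ≠ 0} =
      (q ^ 2 - 1) / 2 := by
  subst hcard
  have hneg : ¬IsSquare (-1 : F) := by
    rw [FiniteField.isSquare_neg_one_iff, not_not, h4]
  have hF : ringChar F ≠ 2 := by
    rw [ne_eq, FiniteField.even_card_iff_char_two]; omega
  have := QuadraticAlgebra.fact_sq_ne_neg_one hneg
  obtain ⟨w, hw⟩ := QuadraticAlgebra.exists_not_isSquare_norm hF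
  have hw0 : w ≠ 0 := by rintro rfl; exact hw (by simp)
  have hcount := QuadraticAlgebra.norm.two_mul_card_isSquare_and_ne_zero (Units.mk0 w hw0) hw
  rw [QuadraticAlgebra.card_norm_ne_zero, Nat.card_eq_fintype_card (α := F)] at hcount
  rw [card_subtype_quadrance X fun t => IsSquare t ∧ t ≠ 0]
  omega

theorem stmt_18 (F : Type*) [Field F] [Fintype F] (q : ℕ)
    (hcard : Fintype.card F = q) (hodd : Odd q) (h4 : q % 4 = 3)
    (X : F × F) :
    Nat.card {Y : F × F // IsSquare (quadrance X Y) ∧ quadrance X Y ≠ 0} =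
      (q ^ 2 - 1) / 2 :=
  stmt_18_general F q hcard h4 X
end

section
/- Let q be an odd prime power with q ≡ 3 (mod 4). If U ⊆ F_q² induces a complete subgraph of the quadrance graph V_q (i.e., Q(X,Y) is a nonzero square for all distinct X, Y ∈ U), then |U| ≤ q. -/
/-!
Since `q ≡ 3 (mod 4)`, `-1` is not a square in `F_q`, but (as every element of a finite field)
it is a sum of two squares `a² + b²`. Along the direction `(a, b)` every quadrance is
`-t²`, a non-square, so no two points of `U` differ by a multiple of `(a, b)`: the projection
`P ↦ b P.1 - a P.2` along that direction is injective on `U`, whence `|U| ≤ q`.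
-/

open scoped Classical

theorem FiniteField.exists_sq_add_sq_eq_neg_one (F : Type*) [Field F] [Finite F] :
    ∃ a b : F, a ^ 2 + b ^ 2 = -1 := by
  have : NeZero (ringChar F) := ⟨CharP.char_ne_zero_of_finite F (ringChar F)⟩
  obtain ⟨a, b, hab⟩ := CharP.sq_add_sq F (ringChar F) (-1)
  exact ⟨a, b, by simpa using hab⟩

section Quadrance

variable {F : Type*} [Field F] {a b : F}

/-- `(a² + b²)(u² + v²) = (au + bv)² + (bu - av)²`, and `bu - av = 0` here. -/
theorem isSquare_neg_quadrance_of_parallel (hab : a ^ 2 + b ^ 2 = -1) {X Y : F × F}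
    (hpar : b * (Y.1 - X.1) = a * (Y.2 - X.2)) : IsSquare (-quadrance X Y) :=
  ⟨a * (Y.1 - X.1) + b * (Y.2 - X.2), by
    unfold quadrance
    linear_combination (-(Y.1 - X.1) ^ 2 - (Y.2 - X.2) ^ 2) * hab
      + (b * (Y.1 - X.1) - a * (Y.2 - X.2)) * hpar⟩

theorem injOn_proj_of_quadrance_isSquare (hns : ¬IsSquare (-1 : F))
    (hab : a ^ 2 + b ^ 2 = -1) {U : Set (F × F)}
    (hU : ∀ X ∈ U, ∀ Y ∈ U, X ≠ Y → IsSquare (quadrance X Y) ∧ quadrance X Y ≠ 0) :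
    Set.InjOn (fun P : F × F => b * P.1 - a * P.2) U := by
  intro X hX Y hY hXY
  by_contra hne
  obtain ⟨hsq, hnz⟩ := hU X hX Y hY hne
  have hpar : b * (Y.1 - X.1) = a * (Y.2 - X.2) := by linear_combination -hXY
  have hneg := isSquare_neg_quadrance_of_parallel hab hpar
  exact hns (by simpa [neg_div, hnz] using hneg.div hsq)

end Quadrance

theorem stmt_19_general (F : Type*) [Field F] [Fintype F] (q : ℕ)
    (hcard : Fintype.card F = q) (h4 : q % 4 = 3)
    (U : Set (F × F))
    (hU : ∀ X ∈ U, ∀ Y ∈ U, X ≠ Y →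
      IsSquare (quadrance X Y) ∧ quadrance X Y ≠ 0) :
    U.ncard ≤ q := by
  have hns : ¬IsSquare (-1 : F) := by
    rw [FiniteField.isSquare_neg_one_iff, hcard, h4]
    decide
  obtain ⟨a, b, hab⟩ := FiniteField.exists_sq_add_sq_eq_neg_one F
  calc U.ncard ≤ (Set.univ : Set F).ncard :=
        Set.ncard_le_ncard_of_injOn _ (fun _ _ => Set.mem_univ _)
          (injOn_proj_of_quadrance_isSquare hns hab hU)
    _ = q := by rw [Set.ncard_univ, Nat.card_eq_fintype_card, hcard]

theorem stmt_19 (F : Type*) [Field F] [Fintype F] (q : ℕ)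
    (hcard : Fintype.card F = q) (hodd : Odd q) (h4 : q % 4 = 3)
    (U : Set (F × F))
    (hU : ∀ X ∈ U, ∀ Y ∈ U, X ≠ Y →
      IsSquare (quadrance X Y) ∧ quadrance X Y ≠ 0) :
    U.ncard ≤ q :=
  stmt_19_general F q hcard h4 U hU
end
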